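/- Let ω ∈ C with ω^2 = λ^2 + iλσ where λ ∈ R \ {0}, σ ∈ (0,1], and ω ∈ C₊ (nonnegative imaginary part). Then the real part of ω satisfies |Re ω| ≥ (√2/2)|λ|, hence |ω + λ| ≥ √(3/2)·|λ|, and consequently |ω − λ|^2 = |iσλ/(ω+λ)|^2 ≤ (2/3)σ^2. -/

import Mathlib

/-!
Write `ω = a + b i`. The real part of `ω² = λ² + iλσ` gives `a² − b² = λ²`, so `|a| ≥ |λ|`; the
imaginary part gives `2ab = λσ`, and since `b ≥ 0` and `σ > 0` the numbers `a` and `λ` have the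
same sign. Hence `‖ω + λ‖ ≥ |a + λ| = |a| + |λ| ≥ 2|λ|`, and the factorisation
`(ω − λ)(ω + λ) = iλσ` turns this into `‖ω − λ‖ ≤ σ / 2`.
-/

open Complex

section SquareRootShift

variable {ω : ℂ} {lam σ : ℝ}

lemma re_sq_sub_im_sq_of_sq_eq (hsq : ω ^ 2 = (lam ^ 2 : ℂ) + I * lam * σ) :
    ω.re ^ 2 - ω.im ^ 2 = lam ^ 2 := by
  simpa [sq] using congrArg re hsq

lemma two_mul_re_mul_im_of_sq_eq (hsq : ω ^ 2 = (lam ^ 2 : ℂ) + I * lam * σ) :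
    2 * (ω.re * ω.im) = lam * σ := by
  have := congrArg im hsq
  simp only [sq, mul_im, add_im, mul_re, I_re, I_im, ofReal_re, ofReal_im] at this
  linarith

lemma abs_le_abs_re_of_sq_eq (hsq : ω ^ 2 = (lam ^ 2 : ℂ) + I * lam * σ) : |lam| ≤ |ω.re| :=
  sq_le_sq.1 (by nlinarith [re_sq_sub_im_sq_of_sq_eq hsq, sq_nonneg ω.im])

lemma re_mul_nonneg_of_sq_eq (hσ : 0 < σ) (him : 0 ≤ ω.im)
    (hsq : ω ^ 2 = (lam ^ 2 : ℂ) + I * lam * σ) : 0 ≤ ω.re * lam := by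
  have hprod := two_mul_re_mul_im_of_sq_eq hsq
  rcases him.eq_or_lt with him_zero | him_pos
  · have hlam : lam = 0 := by
      rw [← him_zero, mul_zero, mul_zero] at hprod
      exact (mul_eq_zero.1 hprod.symm).resolve_right hσ.ne'
    simp [hlam]
  · have : ω.re * lam * ω.im * 2 = lam ^ 2 * σ := by linear_combination lam * hprod
    exact nonneg_of_mul_nonneg_left (by nlinarith [sq_nonneg lam]) him_pos

lemma two_mul_abs_le_norm_add (hσ : 0 < σ) (him : 0 ≤ ω.im)
    (hsq : ω ^ 2 = (lam ^ 2 : ℂ) + I * lam * σ) : 2 * |lam| ≤ ‖ω + lam‖ := by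
  have same_sign := mul_nonneg_iff.1 (re_mul_nonneg_of_sq_eq hσ him hsq)
  calc 2 * |lam| ≤ |ω.re| + |lam| := by linarith [abs_le_abs_re_of_sq_eq hsq]
    _ = |ω.re + lam| := ((abs_add_eq_add_abs_iff _ _).2 same_sign).symm
    _ = |(ω + lam).re| := by simp
    _ ≤ ‖ω + lam‖ := abs_re_le_norm _

lemma norm_sub_mul_norm_add_of_sq_eq (hσ : 0 ≤ σ) (hsq : ω ^ 2 = (lam ^ 2 : ℂ) + I * lam * σ) :
    ‖ω - lam‖ * ‖ω + lam‖ = |lam| * σ := by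
  rw [← norm_mul, show (ω - lam) * (ω + lam) = I * lam * σ by linear_combination hsq]
  simp [abs_of_nonneg hσ]

lemma norm_sub_le_half (hlam : lam ≠ 0) (hσ : 0 < σ) (him : 0 ≤ ω.im)
    (hsq : ω ^ 2 = (lam ^ 2 : ℂ) + I * lam * σ) : ‖ω - lam‖ ≤ σ / 2 := by
  have hlam' : 0 < |lam| := abs_pos.2 hlam
  have hmul := norm_sub_mul_norm_add_of_sq_eq hσ.le hsq
  have hadd := two_mul_abs_le_norm_add hσ him hsq
  nlinarith [norm_nonneg (ω - lam)]

end SquareRootShift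

theorem omega_lambda_estimates_general
    (ω : ℂ) (lam σ : ℝ) (hlam : lam ≠ 0) (hσ0 : 0 < σ)
    (him : 0 ≤ ω.im)
    (hsq : ω ^ 2 = (lam ^ 2 : ℂ) + Complex.I * lam * σ) :
    |ω.re| ≥ (Real.sqrt 2 / 2) * |lam| ∧
    ‖ω + lam‖ ≥ Real.sqrt (3 / 2) * |lam| ∧
    (‖ω - lam‖) ^ 2 ≤ (2 / 3) * σ ^ 2 := by
  refine ⟨?_, ?_, ?_⟩
  · calc Real.sqrt 2 / 2 * |lam| ≤ 1 * |lam| := by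
          gcongr; rw [div_le_one two_pos, Real.sqrt_le_left two_pos.le]; norm_num
      _ ≤ |ω.re| := by simpa using abs_le_abs_re_of_sq_eq hsq
  · calc Real.sqrt (3 / 2) * |lam| ≤ 2 * |lam| := by
          gcongr; rw [Real.sqrt_le_left two_pos.le]; norm_num
      _ ≤ ‖ω + lam‖ := two_mul_abs_le_norm_add hσ0 him hsq
  · calc ‖ω - lam‖ ^ 2 ≤ (σ / 2) ^ 2 := by
          gcongr; exact norm_sub_le_half hlam hσ0 him hsq
      _ ≤ 2 / 3 * σ ^ 2 := by nlinarith [sq_nonneg σ]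

/-- For `ω ∈ ℂ₊` with `ω² = λ² + iλσ`, `λ ∈ ℝ \ {0}`, `σ ∈ (0,1]`, one has
`|Re ω| ≥ (√2/2)|λ|`, hence `|ω + λ| ≥ √(3/2)|λ|` and `|ω − λ|² ≤ (2/3)σ²`. -/
theorem omega_lambda_estimates
    (ω : ℂ) (lam σ : ℝ) (hlam : lam ≠ 0) (hσ0 : 0 < σ) (hσ1 : σ ≤ 1)
    (him : 0 ≤ ω.im)
    (hsq : ω ^ 2 = (lam ^ 2 : ℂ) + Complex.I * lam * σ) :
    |ω.re| ≥ (Real.sqrt 2 / 2) * |lam| ∧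
    ‖ω + lam‖ ≥ Real.sqrt (3 / 2) * |lam| ∧
    (‖ω - lam‖) ^ 2 ≤ (2 / 3) * σ ^ 2 :=
  omega_lambda_estimates_general ω lam σ hlam hσ0 him hsq
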